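/- For any realizable interval sequence S = (A,B) and any levelled sequence C with A ≤ C ≤ B, at least one of the interval sequences (A,C) and (C,B) is realizable. -/

import Mathlib

open Finset

/-- A sequence is graphic if it is the degree sequence of a simple graph. -/
def IsGraphic {n : ℕ} (D : Fin n → ℕ) : Prop :=
  ∃ (G : SimpleGraph (Fin n)) (_ : DecidableRel G.Adj), ∀ i, G.degree i = D i

/-- The levelling operation: decrement entry `α` by 1, increment entry `β` by 1. -/
def lvl {n : ℕ} (D : Fin n → ℕ) (α β : Fin n) : Fin n → ℕ :=
  fun i => if i = α then D α - 1 else if i = β then D β + 1 else D i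

/-- The spread `φ(D) = ∑_{r<s} |d_r - d_s|`. -/
def spread {n : ℕ} (D : Fin n → ℕ) : ℤ :=
  ∑ r : Fin n, ∑ s : Fin n, if r < s then |(D r : ℤ) - (D s : ℤ)| else 0

/-- `A ≤ D ≤ B` coordinatewise. -/
def Between {n : ℕ} (A D B : Fin n → ℕ) : Prop := ∀ i, A i ≤ D i ∧ D i ≤ B i

/-- Volume of `D` w.r.t. lower boundary `A`. -/
def vol {n : ℕ} (A D : Fin n → ℕ) : ℕ := ∑ i, (D i - A i)

/-- An interval sequence `(A,B)` is realizable if it contains a graphic sequence. -/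
def Realizable {n : ℕ} (A B : Fin n → ℕ) : Prop := ∃ D, IsGraphic D ∧ Between A D B

/-- Two sequences are similar if one is a permutation of the other. -/
def SeqSimilar {n : ℕ} (D D' : Fin n → ℕ) : Prop :=
  ∃ σ : Equiv.Perm (Fin n), ∀ i, D' i = D (σ i)

/-- `D` is levelled w.r.t. `(A,B)`: it lies in `[A,B]` and no levelling operation staying
within `[A,B]` strictly decreases its spread. -/
def IsLevelled {n : ℕ} (A B D : Fin n → ℕ) : Prop :=
  Between A D B ∧ ∀ α β : Fin n, α ≠ β → D β < D α → Between A (lvl D α β) B →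
    spread D ≤ spread (lvl D α β)

/-- One levelling step from `D` to `D'` staying within `[A,B]`. -/
def LvlStep {n : ℕ} (A B D D' : Fin n → ℕ) : Prop :=
  ∃ α β : Fin n, α ≠ β ∧ D β < D α ∧ D' = lvl D α β ∧ Between A D' B

/-- `F(ℓ,S) = ∑_i (min(ℓ,b_i) - min(ℓ,a_i))`. -/
noncomputable def Fvol {n : ℕ} (A B : Fin n → ℕ) (ℓ : ℝ) : ℝ :=
  ∑ i, (min ℓ (B i : ℝ) - min ℓ (A i : ℝ))

/-- Upper deviation `δ_U(D,S) = ∑_i max(0, d_i - b_i)` (truncated subtraction). -/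
def devU {n : ℕ} (D B : Fin n → ℕ) : ℕ := ∑ i, (D i - B i)

/-- Lower deviation `δ_L(D,S) = ∑_i max(0, a_i - d_i)` (truncated subtraction). -/
def devL {n : ℕ} (D A : Fin n → ℕ) : ℕ := ∑ i, (A i - D i)

/-- `R` lies in `[B,⊤]`, `(A,R)` is realizable, and `∑ (r_i - b_i)` is minimum. -/
def MinUpper {n : ℕ} (A B R : Fin n → ℕ) : Prop :=
  (∀ i, B i ≤ R i ∧ R i ≤ n - 1) ∧ Realizable A R ∧
  ∀ R' : Fin n → ℕ, (∀ i, B i ≤ R' i ∧ R' i ≤ n - 1) → Realizable A R' →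
    ∑ i, (R i - B i) ≤ ∑ i, (R' i - B i)

/-! Start from a graphic `D` in `[A,B]` and move it towards `C`. Levelling preserves graphicity:
since `α` has larger degree than `β`, some neighbour `v ≠ β` of `α` is not adjacent to `β`, and the
edge `αv` can be replaced by `βv`. If `D` is neither below nor above `C`, pick `i` with
`C i < D i` and `j` with `D j < C j`. When `D j < D i`, levelling `D` from `i` to `j` stays
graphic and inside `[A,B]`, and strictly shrinks the distance to `C`. Otherwise
`C i < D i ≤ D j < C j`, so levelling `C` from `j` to `i` stays inside `[A,B]` and strictly lowers
the spread, which a levelled `C` forbids. -/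

namespace SimpleGraph

variable {V : Type*} {G : SimpleGraph V} {s t : V}

lemma deleteEdges_sup_edge (h : G.Adj s t) : G.deleteEdges {s(s, t)} ⊔ edge s t = G := by
  ext x y
  rw [sup_adj, deleteEdges_adj, adj_edge, Set.mem_singleton_iff]
  constructor
  · rintro (⟨hxy, -⟩ | ⟨he, -⟩)
    · exact hxy
    · rwa [← mem_edgeSet, ← he]
  · intro hxy
    by_cases he : s(x, y) = s(s, t)
    · exact .inr ⟨he.symm, G.ne_of_adj hxy⟩
    · exact .inl ⟨hxy, he⟩

variable [Fintype V] [DecidableEq V] [DecidableRel G.Adj]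

lemma exists_adj_not_adj_of_degree_lt {a b : V} (h : G.degree b < G.degree a) :
    ∃ v, G.Adj a v ∧ ¬G.Adj b v ∧ v ≠ b := by
  by_contra! hcon
  have hsub : (G.neighborFinset a).erase b ⊆ (G.neighborFinset b).erase a := by
    intro v hv
    simp only [mem_erase, mem_neighborFinset] at hv ⊢
    by_contra hvb
    exact hv.1 (hcon v hv.2 fun hbv => hvb ⟨fun hva => G.loopless.irrefl a (hva ▸ hv.2), hbv⟩)
  have hcard := card_le_card hsub
  simp only [card_erase_eq_ite, mem_neighborFinset, G.adj_comm b a,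
    card_neighborFinset_eq_degree] at hcard
  split_ifs at hcard with hab
  · have : 0 < G.degree b := G.degree_pos_iff_exists_adj b |>.2 ⟨a, hab.symm⟩
    omega
  · omega

lemma neighborFinset_sup_edge_left (hst : s ≠ t) :
    (G ⊔ edge s t).neighborFinset s = insert t (G.neighborFinset s) := by
  ext y
  simp only [mem_neighborFinset, sup_adj, edge_adj, mem_insert]
  aesop

lemma neighborFinset_sup_edge_right (hst : s ≠ t) :
    (G ⊔ edge s t).neighborFinset t = insert s (G.neighborFinset t) := by
  ext y
  simp only [mem_neighborFinset, sup_adj, edge_adj, mem_insert]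
  aesop

lemma neighborFinset_sup_edge_of_ne {x : V} (hs : x ≠ s) (ht : x ≠ t) :
    (G ⊔ edge s t).neighborFinset x = G.neighborFinset x := by
  ext y
  simp [edge_adj, hs, ht]

lemma degree_sup_edge (hn : ¬G.Adj s t) (hst : s ≠ t) (x : V) :
    (G ⊔ edge s t).degree x = G.degree x + if x = s ∨ x = t then 1 else 0 := by
  simp only [← card_neighborFinset_eq_degree]
  rcases eq_or_ne x s with rfl | hs
  · rw [neighborFinset_sup_edge_left hst, card_insert_of_notMem (by simpa using hn),
      if_pos (.inl rfl)]
  rcases eq_or_ne x t with rfl | ht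
  · rw [neighborFinset_sup_edge_right hst,
      card_insert_of_notMem (by simpa [G.adj_comm] using hn), if_pos (.inr rfl)]
  · rw [neighborFinset_sup_edge_of_ne hs ht, if_neg (by tauto), add_zero]

end SimpleGraph

open SimpleGraph in
theorem IsGraphic.lvl {n : ℕ} {D : Fin n → ℕ} {α β : Fin n} (hD : IsGraphic D) (hne : α ≠ β)
    (hlt : D β < D α) : IsGraphic (lvl D α β) := by
  classical
  obtain ⟨G, _, hdeg⟩ := hD
  obtain ⟨v, hαv, hβv, hvβ⟩ :=
    G.exists_adj_not_adj_of_degree_lt (show G.degree β < G.degree α by rwa [hdeg, hdeg])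
  set G₀ := G.deleteEdges {s(α, v)}
  have hdegG (x : Fin n) : G.degree x = G₀.degree x + if x = α ∨ x = v then 1 else 0 := by
    convert G₀.degree_sup_edge (by simp [G₀]) (G.ne_of_adj hαv) x using 2
    exact (deleteEdges_sup_edge hαv).symm
  refine ⟨G₀ ⊔ edge β v, inferInstance, fun x => ?_⟩
  have hx := hdegG x
  rw [hdeg] at hx
  rw [G₀.degree_sup_edge (fun h => hβv (deleteEdges_le _ h)) hvβ.symm x]
  have hvα : v ≠ α := (G.ne_of_adj hαv).symm
  unfold _root_.lvl
  grind

lemma sum_sum_split_pair {ι M : Type*} [Fintype ι] [DecidableEq ι] [AddCommMonoid M]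
    (f : ι → ι → M) {a b : ι} (hab : a ≠ b) :
    ∑ r, ∑ s, f r s = ∑ r ∈ {a, b}ᶜ, ∑ s ∈ {a, b}ᶜ, f r s
      + ∑ s ∈ {a, b}ᶜ, (f a s + f b s + f s a + f s b) + (f a a + f a b + f b a + f b b) := by
  have split (g : ι → M) : ∑ r, g r = g a + g b + ∑ r ∈ {a, b}ᶜ, g r := by
    rw [← sum_add_sum_compl {a, b} g, sum_pair hab]
  simp only [split, sum_add_distrib]
  abel

lemma sum_sum_abs_sub_lt_of_move_closer {ι : Type*} [Fintype ι] [DecidableEq ι] {d d' : ι → ℤ}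
    {a b : ι} (hab : a ≠ b) (hgap : d b + 2 ≤ d a) (ha : d' a = d a - 1) (hb : d' b = d b + 1)
    (hd' : ∀ r, r ≠ a → r ≠ b → d' r = d r) :
    ∑ r, ∑ s, |d' r - d' s| < ∑ r, ∑ s, |d r - d s| := by
  have hP : ∀ r ∈ ({a, b}ᶜ : Finset ι), d' r = d r := fun r hr => by
    simp only [mem_compl, mem_insert, mem_singleton, not_or] at hr
    exact hd' r hr.1 hr.2
  rw [sum_sum_split_pair _ hab, sum_sum_split_pair _ hab]
  refine add_lt_add_of_le_of_lt (add_le_add (le_of_eq ?_) (sum_le_sum fun s hs => ?_)) ?_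
  · exact sum_congr rfl fun r hr => sum_congr rfl fun s hs => by rw [hP r hr, hP s hs]
  · rw [ha, hb, hP s hs]
    simp only [abs_eq_max_neg]
    omega
  · rw [ha, hb]
    simp only [abs_eq_max_neg]
    omega

section Levelling

variable {n : ℕ} {A B C D : Fin n → ℕ} {α β : Fin n}

@[simp] lemma lvl_apply_left : lvl D α β α = D α - 1 := if_pos rfl

@[simp] lemma lvl_apply_right (hne : α ≠ β) : lvl D α β β = D β + 1 := by
  simp [lvl, hne.symm]

lemma lvl_apply_of_ne {i : Fin n} (hα : i ≠ α) (hβ : i ≠ β) : lvl D α β i = D i := by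
  simp [lvl, hα, hβ]

lemma two_mul_spread (D : Fin n → ℕ) :
    2 * spread D = ∑ r, ∑ s, |(D r : ℤ) - D s| := by
  have hswap : spread D = ∑ r, ∑ s, if s < r then |(D s : ℤ) - D r| else 0 := sum_comm
  rw [two_mul]
  nth_rewrite 2 [hswap]
  rw [spread, ← sum_add_distrib]
  refine sum_congr rfl fun r _ => ?_
  rw [← sum_add_distrib]
  refine sum_congr rfl fun s _ => ?_
  rcases lt_trichotomy r s with h | rfl | h
  · rw [if_pos h, if_neg (asymm h), add_zero]
  · simp
  · rw [if_neg (asymm h), if_pos h, zero_add, abs_sub_comm]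

lemma spread_lvl_lt (hne : α ≠ β) (hgap : D β + 2 ≤ D α) : spread (lvl D α β) < spread D := by
  have h := sum_sum_abs_sub_lt_of_move_closer (d := fun i => (D i : ℤ))
    (d' := fun i => (lvl D α β i : ℤ)) hne (by exact_mod_cast hgap) (by simp; omega) (by simp [hne])
    (fun r hα hβ => by simp [lvl_apply_of_ne hα hβ])
  rw [← two_mul_spread, ← two_mul_spread] at h
  omega

lemma IsLevelled.lt_add_two (hC : IsLevelled A B C) (hne : α ≠ β)
    (hB : Between A (lvl C α β) B) : C α < C β + 2 := by
  by_contra! hgap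
  exact (spread_lvl_lt hne hgap).not_ge (hC.2 α β hne (by omega) hB)

lemma Between.lvl (hX : Between A C B) (hY : Between A D B) (hα : D α < C α) (hβ : C β < D β) :
    Between A (lvl C α β) B := by
  have hne : α ≠ β := by rintro rfl; omega
  intro i
  rcases eq_or_ne i α with rfl | hiα
  · rw [lvl_apply_left]; have := hX i; have := hY i; omega
  rcases eq_or_ne i β with rfl | hiβ
  · rw [lvl_apply_right hne]; have := hX i; have := hY i; omega
  · rw [lvl_apply_of_ne hiα hiβ]; exact hX i

lemma sum_dist_lvl_lt (hα : C α < D α) (hβ : D β < C β) :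
    ∑ i, (lvl D α β i).dist (C i) < ∑ i, (D i).dist (C i) := by
  have hne : α ≠ β := by rintro rfl; omega
  refine sum_lt_sum (fun i _ => ?_) ⟨α, mem_univ _, ?_⟩
  · rcases eq_or_ne i α with rfl | hiα
    · rw [lvl_apply_left]; unfold Nat.dist; omega
    rcases eq_or_ne i β with rfl | hiβ
    · rw [lvl_apply_right hne]; unfold Nat.dist; omega
    · rw [lvl_apply_of_ne hiα hiβ]
  · rw [lvl_apply_left]; unfold Nat.dist; omega

theorem IsLevelled.realizable_of_isGraphic (hC : IsLevelled A B C) (hD : IsGraphic D)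
    (hDB : Between A D B) : Realizable A C ∨ Realizable C B := by
  induction h : ∑ i, (D i).dist (C i) using Nat.strong_induction_on generalizing D with
  | _ m ih =>
  by_cases hle : ∀ i, D i ≤ C i
  · exact .inl ⟨D, hD, fun i => ⟨(hDB i).1, hle i⟩⟩
  by_cases hge : ∀ i, C i ≤ D i
  · exact .inr ⟨D, hD, fun i => ⟨hge i, (hDB i).2⟩⟩
  simp only [not_forall, not_le] at hle hge
  obtain ⟨i, hi⟩ := hle
  obtain ⟨j, hj⟩ := hge
  have hij : i ≠ j := by rintro rfl; omega
  rcases lt_or_ge (D j) (D i) with hji | hij_le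
  · exact ih _ (h ▸ sum_dist_lvl_lt hi hj) (hD.lvl hij hji) (hDB.lvl hC.1 hi hj) rfl
  · have := hC.lt_add_two hij.symm (hC.1.lvl hDB hj hi)
    omega

end Levelling

theorem stmt_11_general {n : ℕ} (A B C : Fin n → ℕ)
    (hR : Realizable A B) (hC : IsLevelled A B C) :
    Realizable A C ∨ Realizable C B := by
  obtain ⟨D, hD, hDB⟩ := hR
  exact hC.realizable_of_isGraphic hD hDB

theorem stmt_11 {n : ℕ} (A B C : Fin n → ℕ)
    (hS : ∀ i, A i ≤ B i ∧ B i ≤ n - 1)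
    (hR : Realizable A B) (hC : IsLevelled A B C) :
    Realizable A C ∨ Realizable C B :=
  stmt_11_general A B C hR hC
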